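/- Let f, g : {0,1}^n → ℝ satisfy either ∂_{ij} f ≥ 0 and ∂_{ij} g ≥ 0 pointwise for all i ≠ j, or ∂_{ij} f ≤ 0 and ∂_{ij} g ≤ 0 pointwise for all i ≠ j. Then ∑_{S ⊆ [n], |S| ≥ 2} f̂(S)·ĝ(S) = 0 if and only if for every pair 1 ≤ i < j ≤ n at least one of ∂_{ij} f or ∂_{ij} g is identically zero on {0,1}^n. -/

import Mathlib

open Finset MeasureTheory

/-- Expectation with respect to the uniform measure on `{0,1}^n`. -/
noncomputable def Ev (n : ℕ) (f : (Fin n → Bool) → ℝ) : ℝ :=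
  (∑ x : Fin n → Bool, f x) / 2 ^ n

/-- `f` is increasing (monotone w.r.t. the coordinatewise order). -/
def Increasing' (n : ℕ) (f : (Fin n → Bool) → ℝ) : Prop :=
  ∀ x y : Fin n → Bool, (∀ i, x i ≤ y i) → f x ≤ f y

/-- `f` is submodular: `f(x∧y) + f(x∨y) ≤ f(x) + f(y)`. -/
def Submodular' (n : ℕ) (f : (Fin n → Bool) → ℝ) : Prop :=
  ∀ x y : Fin n → Bool,
    f (fun i => x i && y i) + f (fun i => x i || y i) ≤ f x + f y

/-- `f` is supermodular: `f(x) + f(y) ≤ f(x∧y) + f(x∨y)`. -/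
def Supermodular' (n : ℕ) (f : (Fin n → Bool) → ℝ) : Prop :=
  ∀ x y : Fin n → Bool,
    f x + f y ≤ f (fun i => x i && y i) + f (fun i => x i || y i)

/-- Discrete derivative `∂_i f (x) = f(x^{(i→1)}) - f(x^{(i→0)})`. -/
noncomputable def pD (n : ℕ) (i : Fin n) (f : (Fin n → Bool) → ℝ) :
    (Fin n → Bool) → ℝ :=
  fun x => f (Function.update x i true) - f (Function.update x i false)

/-- Character `χ_S(x) = (-1)^{∑_{i ∈ S} x_i}`. -/
noncomputable def chi (n : ℕ) (S : Finset (Fin n)) (x : Fin n → Bool) : ℝ :=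
  ∏ i ∈ S, (if x i then (-1 : ℝ) else 1)

/-- Fourier--Walsh coefficient `f̂(S) = E[f · χ_S]`. -/
noncomputable def fhat (n : ℕ) (f : (Fin n → Bool) → ℝ) (S : Finset (Fin n)) : ℝ :=
  Ev n (fun x => f x * chi n S x)

/-- Heat semigroup `P_t f = ∑_S e^{-t|S|} f̂(S) χ_S`. -/
noncomputable def heat (n : ℕ) (t : ℝ) (f : (Fin n → Bool) → ℝ) :
    (Fin n → Bool) → ℝ :=
  fun x => ∑ S : Finset (Fin n), Real.exp (-(t * S.card)) * fhat n f S * chi n S x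

/-- Influence of coordinate `i` on a Boolean (`{0,1}`-valued) function:
`Inf_i[f] = P[f(x) ≠ f(x ⊕ e_i)]`. -/
noncomputable def InfB (n : ℕ) (i : Fin n) (f : (Fin n → Bool) → ℝ) : ℝ :=
  Ev n (fun x => if f x = f (Function.update x i (! x i)) then 0 else 1)

/-- `L¹`-influence `Inf_i^{(1)}[f] = E[|∂_i f|]`. -/
noncomputable def Inf1 (n : ℕ) (i : Fin n) (f : (Fin n → Bool) → ℝ) : ℝ :=
  Ev n (fun x => |pD n i f x|)

/-- `L²`-influence `Inf_i[f] = E[|∂_i f|²]` for real-valued `f`. -/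
noncomputable def Inf2 (n : ℕ) (i : Fin n) (f : (Fin n → Bool) → ℝ) : ℝ :=
  Ev n (fun x => |pD n i f x| ^ 2)

/-- Difference operator `D_i f (x) = f(x) - f(x ⊕ e_i)`. -/
noncomputable def Dop (n : ℕ) (i : Fin n) (f : (Fin n → Bool) → ℝ) :
    (Fin n → Bool) → ℝ :=
  fun x => f x - f (Function.update x i (! x i))

/-- `‖f‖_p = (E[|f|^p])^{1/p}` (also used as a quasi-norm for `0 < p < 1`). -/
noncomputable def nrm (n : ℕ) (p : ℝ) (f : (Fin n → Bool) → ℝ) : ℝ :=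
  (Ev n (fun x => |f x| ^ p)) ^ (1 / p)

/-- Iterated discrete derivative along a list of coordinates. -/
noncomputable def pDList (n : ℕ) : List (Fin n) → ((Fin n → Bool) → ℝ) → ((Fin n → Bool) → ℝ)
  | [], f => f
  | i :: l, f => pD n i (pDList n l f)

/-- `∂_T f = ∂_{i₁} ∘ ⋯ ∘ ∂_{i_d} f` for `T = {i₁ < ⋯ < i_d}` (the order is immaterial
since discrete derivatives along distinct coordinates commute). -/
noncomputable def pDT (n : ℕ) (T : Finset (Fin n)) (f : (Fin n → Bool) → ℝ) :
    (Fin n → Bool) → ℝ :=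
  pDList n (T.sort (· ≤ ·)) f

/-!
For `i ≠ j`, the Walsh sums of `∂_i ∂_j f` are `4` times those of `f` on the sets `S ∪ {i, j}`.
Pairing `∂_i ∂_j f` with `∂_i ∂_j g` through the noise kernel `∏_k (1 + ρ σ(x_k) σ(y_k)) ≥ (1 - ρ)^n`
and averaging against `(1 - ρ) dρ` on `[0, 1]` weights a level-`m` term by `1 / (m (m - 1))`, the
reciprocal of the number of ordered pairs in an `m`-set. Summed over ordered pairs, these
contributions give back the level-`≥ 2` weight. Under the sign condition each contribution is
nonnegative and at least `(∑ ∂_{ij} f) (∑ ∂_{ij} g) / (n + 2)`, a product of two sums of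
same-signed terms. So the weight vanishes iff every such product does.
-/

lemma Finset.sum_filter_notMem_notMem_insert_insert {α M : Type*} [Fintype α] [DecidableEq α]
    [AddCommMonoid M] {i j : α} (hij : i ≠ j) (G : Finset α → M) :
    ∑ S ∈ univ.filter (fun S => i ∉ S ∧ j ∉ S), G (insert j (insert i S))
      = ∑ T ∈ univ.filter (fun T => i ∈ T ∧ j ∈ T), G T := by
  refine sum_nbij' (fun S => insert j (insert i S)) (fun T => (T.erase j).erase i)
    ?_ ?_ ?_ ?_ fun _ _ => rfl
  · intro S _
    simp
  · intro T _
    simp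
  · intro S hS
    simp only [mem_filter, mem_univ, true_and] at hS
    rw [erase_insert (by simp [hij.symm, hS.2]), erase_insert hS.1]
  · intro T hT
    simp only [mem_filter, mem_univ, true_and] at hT
    rw [insert_erase (mem_erase.2 ⟨hij, hT.1⟩), insert_erase hT.2]

lemma Finset.sum_offDiag_sum_filter_mem_mem {α M : Type*} [Fintype α] [DecidableEq α]
    [AddCommMonoid M] (v : Finset α → M) :
    ∑ p ∈ (univ : Finset α).offDiag, ∑ T ∈ univ.filter (fun T => p.1 ∈ T ∧ p.2 ∈ T), v T
      = ∑ T, T.offDiag.card • v T := by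
  simp only [sum_filter]
  rw [sum_comm]
  refine sum_congr rfl fun T _ => ?_
  rw [← sum_filter, ← sum_const]
  congr 1
  ext p
  simp only [mem_filter, mem_offDiag, mem_univ, true_and]
  tauto

lemma sum_mul_sum_nonneg {α : Type*} [Fintype α] {a b : α → ℝ} (hab : ∀ x y, 0 ≤ a x * b y) :
    0 ≤ (∑ x, a x) * ∑ y, b y := by
  rw [sum_mul_sum]
  exact sum_nonneg fun x _ => sum_nonneg fun y _ => hab x y

lemma eq_zero_or_eq_zero_of_sum_mul_sum_eq_zero {α : Type*} [Fintype α] {a b : α → ℝ}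
    (hab : ∀ x y, 0 ≤ a x * b y) (h : (∑ x, a x) * ∑ y, b y = 0) : a = 0 ∨ b = 0 := by
  rw [sum_mul_sum] at h
  have hxy : ∀ x y, a x * b y = 0 := fun x y =>
    (sum_eq_zero_iff_of_nonneg fun y _ => hab x y).1
      ((sum_eq_zero_iff_of_nonneg fun x _ => sum_nonneg fun y _ => hab x y).1 h x (mem_univ x))
      y (mem_univ y)
  by_contra! hne
  obtain ⟨x, hx⟩ := Function.ne_iff.1 hne.1
  obtain ⟨y, hy⟩ := Function.ne_iff.1 hne.2
  exact mul_ne_zero hx hy (hxy x y)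

lemma integral_one_sub_mul_pow (m : ℕ) :
    ∫ ρ in (0 : ℝ)..1, (1 - ρ) * ρ ^ m = 1 / (((m : ℝ) + 1) * (m + 2)) := by
  have hsplit : ∀ ρ : ℝ, (1 - ρ) * ρ ^ m = ρ ^ m - ρ ^ (m + 1) := fun ρ => by ring
  simp only [hsplit]
  rw [intervalIntegral.integral_sub (intervalIntegral.intervalIntegrable_pow m)
    (intervalIntegral.intervalIntegrable_pow (m + 1)), integral_pow, integral_pow]
  field_simp
  push_cast
  ring

lemma integral_one_sub_pow (m : ℕ) : ∫ ρ in (0 : ℝ)..1, (1 - ρ) ^ m = 1 / ((m : ℝ) + 1) := by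
  simp [intervalIntegral.integral_comp_sub_left (fun ρ : ℝ => ρ ^ m)]

namespace BoolCube

variable {n : ℕ}

def sign (b : Bool) : ℝ := if b then -1 else 1

lemma neg_one_le_sign_mul_sign (a b : Bool) : -1 ≤ sign a * sign b := by
  cases a <;> cases b <;> norm_num [sign]

def flipAt (i : Fin n) (x : Fin n → Bool) : Fin n → Bool := Function.update x i (!x i)

lemma flipAt_involutive (i : Fin n) : Function.Involutive (flipAt i) := by
  intro x
  simp [flipAt]

lemma sum_comp_flipAt {M : Type*} [AddCommMonoid M] (i : Fin n) (F : (Fin n → Bool) → M) :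
    ∑ x, F (flipAt i x) = ∑ x, F x :=
  Fintype.sum_bijective _ (flipAt_involutive i).bijective _ _ fun _ => rfl

lemma sign_flipAt_self (i : Fin n) (x : Fin n → Bool) : sign (flipAt i x i) = -sign (x i) := by
  simp only [flipAt, Function.update_self]
  cases x i <;> norm_num [sign]

lemma chi_insert {i : Fin n} {S : Finset (Fin n)} (hi : i ∉ S) (x : Fin n → Bool) :
    chi n (insert i S) x = sign (x i) * chi n S x :=
  prod_insert hi

lemma chi_flipAt_of_notMem {i : Fin n} {S : Finset (Fin n)} (hi : i ∉ S) (x : Fin n → Bool) :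
    chi n S (flipAt i x) = chi n S x :=
  prod_congr rfl fun k hk => by
    rw [flipAt, Function.update_of_ne (ne_of_mem_of_not_mem hk hi)]

lemma chi_flipAt_of_mem {i : Fin n} {S : Finset (Fin n)} (hi : i ∈ S) (x : Fin n → Bool) :
    chi n S (flipAt i x) = -chi n S x := by
  have hi' := notMem_erase i S
  rw [← insert_erase hi, chi_insert hi', chi_insert hi', chi_flipAt_of_notMem hi',
    sign_flipAt_self, neg_mul]

lemma pD_flipAt (i : Fin n) (h : (Fin n → Bool) → ℝ) (x : Fin n → Bool) :
    pD n i h (flipAt i x) = pD n i h x := by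
  simp only [pD, flipAt, Function.update_idem]

lemma pD_eq_sign_mul (i : Fin n) (h : (Fin n → Bool) → ℝ) (x : Fin n → Bool) :
    pD n i h x = -sign (x i) * (h x - h (flipAt i x)) := by
  have hself : Function.update x i (x i) = x := Function.update_eq_self i x
  cases hx : x i <;> rw [hx] at hself <;> simp [pD, flipAt, sign, hx, hself]

lemma pD_comm (i j : Fin n) (h : (Fin n → Bool) → ℝ) :
    pD n i (pD n j h) = pD n j (pD n i h) := by
  rcases eq_or_ne i j with rfl | hij
  · rfl
  funext x
  simp only [pD, Function.update_comm hij]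
  ring

noncomputable def fourierSum (f : (Fin n → Bool) → ℝ) (S : Finset (Fin n)) : ℝ :=
  ∑ x, f x * chi n S x

lemma fourierSum_pD_of_mem {i : Fin n} {S : Finset (Fin n)} (hi : i ∈ S)
    (h : (Fin n → Bool) → ℝ) : fourierSum (pD n i h) S = 0 := by
  have hanti : fourierSum (pD n i h) S = -fourierSum (pD n i h) S := by
    calc fourierSum (pD n i h) S = ∑ x, pD n i h (flipAt i x) * chi n S (flipAt i x) :=
          (sum_comp_flipAt i fun x => pD n i h x * chi n S x).symm
      _ = -fourierSum (pD n i h) S := by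
          simp only [fourierSum, pD_flipAt, chi_flipAt_of_mem hi, mul_neg,
            sum_neg_distrib]
  linarith

lemma fourierSum_pD_of_notMem {i : Fin n} {S : Finset (Fin n)} (hi : i ∉ S)
    (h : (Fin n → Bool) → ℝ) : fourierSum (pD n i h) S = -2 * fourierSum h (insert i S) := by
  have hflip : ∑ x, h (flipAt i x) * (sign (x i) * chi n S x)
      = -fourierSum h (insert i S) := by
    calc ∑ x, h (flipAt i x) * (sign (x i) * chi n S x)
        = ∑ x, h x * (sign (flipAt i x i) * chi n S (flipAt i x)) := by
          rw [← sum_comp_flipAt i]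
          simp only [flipAt_involutive i _]
      _ = -fourierSum h (insert i S) := by
          simp only [fourierSum, chi_insert hi, sign_flipAt_self, chi_flipAt_of_notMem hi,
            neg_mul, mul_neg, sum_neg_distrib]
  have hsplit : ∀ x, pD n i h x * chi n S x
      = -(h x * chi n (insert i S) x) + h (flipAt i x) * (sign (x i) * chi n S x) := by
    intro x
    rw [pD_eq_sign_mul, chi_insert hi]
    ring
  simp only [fourierSum, hsplit, sum_add_distrib, sum_neg_distrib]
  rw [hflip, fourierSum]
  ring

lemma fourierSum_pD_pD_of_notMem {i j : Fin n} {S : Finset (Fin n)} (hij : i ≠ j) (hi : i ∉ S)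
    (hj : j ∉ S) (h : (Fin n → Bool) → ℝ) :
    fourierSum (pD n i (pD n j h)) S = 4 * fourierSum h (insert j (insert i S)) := by
  have hj' : j ∉ insert i S := by simp [hij.symm, hj]
  rw [fourierSum_pD_of_notMem hi, fourierSum_pD_of_notMem hj']
  ring

lemma fourierSum_pD_pD_of_mem {i j : Fin n} {S : Finset (Fin n)} (hS : i ∈ S ∨ j ∈ S)
    (h : (Fin n → Bool) → ℝ) : fourierSum (pD n i (pD n j h)) S = 0 := by
  rcases hS with hi | hj
  · exact fourierSum_pD_of_mem hi _
  · rw [pD_comm]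
    exact fourierSum_pD_of_mem hj _

def noiseKernel (ρ : ℝ) (x y : Fin n → Bool) : ℝ := ∏ k, (1 + ρ * (sign (x k) * sign (y k)))

lemma noiseKernel_eq_sum (ρ : ℝ) (x y : Fin n → Bool) :
    noiseKernel ρ x y = ∑ S, ρ ^ S.card * (chi n S x * chi n S y) := by
  rw [noiseKernel, prod_one_add, powerset_univ]
  refine sum_congr rfl fun S _ => ?_
  rw [prod_mul_distrib, prod_mul_distrib, prod_const]
  rfl

lemma one_sub_pow_le_noiseKernel {ρ : ℝ} (h0 : 0 ≤ ρ) (h1 : ρ ≤ 1) (x y : Fin n → Bool) :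
    (1 - ρ) ^ n ≤ noiseKernel ρ x y := by
  have hfactor : ∀ k ∈ univ, 1 - ρ ≤ 1 + ρ * (sign (x k) * sign (y k)) := fun k _ => by
    nlinarith [neg_one_le_sign_mul_sign (x k) (y k)]
  simpa [noiseKernel] using prod_le_prod (fun _ _ => sub_nonneg.2 h1) hfactor

noncomputable def noiseForm (ρ : ℝ) (a b : (Fin n → Bool) → ℝ) : ℝ :=
  ∑ x, ∑ y, a x * b y * noiseKernel ρ x y

lemma noiseForm_eq_sum (ρ : ℝ) (a b : (Fin n → Bool) → ℝ) :
    noiseForm ρ a b = ∑ S, ρ ^ S.card * (fourierSum a S * fourierSum b S) := by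
  calc noiseForm ρ a b
      = ∑ x, ∑ S, ∑ y, ρ ^ S.card * (a x * chi n S x * (b y * chi n S y)) := by
        simp only [noiseForm, noiseKernel_eq_sum, mul_sum]
        refine sum_congr rfl fun x _ => ?_
        rw [sum_comm]
        exact sum_congr rfl fun S _ => sum_congr rfl fun y _ => by ring
    _ = ∑ S, ∑ x, ∑ y, ρ ^ S.card * (a x * chi n S x * (b y * chi n S y)) := sum_comm
    _ = ∑ S, ρ ^ S.card * (fourierSum a S * fourierSum b S) := by
        refine sum_congr rfl fun S _ => ?_
        rw [fourierSum, fourierSum, sum_mul_sum, mul_sum]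
        simp only [mul_sum]

lemma pow_mul_sum_mul_sum_le_noiseForm {a b : (Fin n → Bool) → ℝ} (hab : ∀ x y, 0 ≤ a x * b y)
    {ρ : ℝ} (h0 : 0 ≤ ρ) (h1 : ρ ≤ 1) :
    (1 - ρ) ^ n * ((∑ x, a x) * ∑ y, b y) ≤ noiseForm ρ a b := by
  rw [sum_mul_sum, mul_sum]
  refine sum_le_sum fun x _ => ?_
  rw [mul_sum]
  exact sum_le_sum fun y _ => by
    rw [mul_comm]
    exact mul_le_mul_of_nonneg_left (one_sub_pow_le_noiseKernel h0 h1 x y) (hab x y)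

lemma continuous_noiseForm (a b : (Fin n → Bool) → ℝ) : Continuous fun ρ => noiseForm ρ a b := by
  unfold noiseForm noiseKernel
  fun_prop

noncomputable def averagedNoiseForm (a b : (Fin n → Bool) → ℝ) : ℝ :=
  ∫ ρ in (0 : ℝ)..1, (1 - ρ) * noiseForm ρ a b

lemma averagedNoiseForm_eq_sum (a b : (Fin n → Bool) → ℝ) :
    averagedNoiseForm a b
      = ∑ S, fourierSum a S * fourierSum b S / (((S.card : ℝ) + 1) * (S.card + 2)) := by
  simp only [averagedNoiseForm, noiseForm_eq_sum, mul_sum]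
  rw [intervalIntegral.integral_finsetSum fun S _ => Continuous.intervalIntegrable (by fun_prop) _ _]
  refine sum_congr rfl fun S _ => ?_
  simp only [← mul_assoc, intervalIntegral.integral_mul_const, integral_one_sub_mul_pow]
  ring

lemma sum_mul_sum_div_le_averagedNoiseForm {a b : (Fin n → Bool) → ℝ}
    (hab : ∀ x y, 0 ≤ a x * b y) :
    (∑ x, a x) * (∑ y, b y) / (n + 2) ≤ averagedNoiseForm a b := by
  have hmono : ∫ ρ in (0 : ℝ)..1, (1 - ρ) ^ (n + 1) * ((∑ x, a x) * ∑ y, b y)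
      ≤ averagedNoiseForm a b := by
    refine intervalIntegral.integral_mono_on zero_le_one
      (Continuous.intervalIntegrable (by fun_prop) _ _)
      (((continuous_const.sub continuous_id).mul (continuous_noiseForm a b)).intervalIntegrable
        _ _) fun ρ hρ => ?_
    rw [pow_succ', mul_assoc]
    exact mul_le_mul_of_nonneg_left (pow_mul_sum_mul_sum_le_noiseForm hab hρ.1 hρ.2)
      (sub_nonneg.2 hρ.2)
  rw [intervalIntegral.integral_mul_const, integral_one_sub_pow] at hmono
  convert hmono using 1
  push_cast
  ring

lemma averagedNoiseForm_eq_zero_iff {a b : (Fin n → Bool) → ℝ} (hab : ∀ x y, 0 ≤ a x * b y) :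
    averagedNoiseForm a b = 0 ↔ a = 0 ∨ b = 0 := by
  constructor
  · intro h
    have hle := sum_mul_sum_div_le_averagedNoiseForm hab
    rw [h, div_le_iff₀ (by positivity), zero_mul] at hle
    exact eq_zero_or_eq_zero_of_sum_mul_sum_eq_zero hab (le_antisymm hle (sum_mul_sum_nonneg hab))
  · rintro (rfl | rfl) <;> simp [averagedNoiseForm, noiseForm]

lemma averagedNoiseForm_nonneg {a b : (Fin n → Bool) → ℝ} (hab : ∀ x y, 0 ≤ a x * b y) :
    0 ≤ averagedNoiseForm a b :=
  (div_nonneg (sum_mul_sum_nonneg hab) (by positivity)).trans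
    (sum_mul_sum_div_le_averagedNoiseForm hab)

lemma averagedNoiseForm_pD_pD {i j : Fin n} (hij : i ≠ j) (f g : (Fin n → Bool) → ℝ) :
    averagedNoiseForm (pD n i (pD n j f)) (pD n i (pD n j g))
      = 16 * ∑ T ∈ univ.filter (fun T => i ∈ T ∧ j ∈ T),
          fourierSum f T * fourierSum g T / (((T.card : ℝ) - 1) * T.card) := by
  rw [averagedNoiseForm_eq_sum, ← sum_filter_of_ne (p := fun S => i ∉ S ∧ j ∉ S),
    ← Finset.sum_filter_notMem_notMem_insert_insert hij, mul_sum]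
  · refine sum_congr rfl fun S hS => ?_
    obtain ⟨hi, hj⟩ := (mem_filter.1 hS).2
    have hj' : j ∉ insert i S := by simp [hij.symm, hj]
    rw [fourierSum_pD_pD_of_notMem hij hi hj, fourierSum_pD_pD_of_notMem hij hi hj,
      card_insert_of_notMem hj', card_insert_of_notMem hi]
    push_cast
    ring
  · intro S _ hne
    by_contra hS
    rw [fourierSum_pD_pD_of_mem (by tauto) f, zero_mul, zero_div] at hne
    exact hne rfl

lemma sum_offDiag_averagedNoiseForm_pD_pD (f g : (Fin n → Bool) → ℝ) :
    ∑ p ∈ (univ : Finset (Fin n)).offDiag,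
        averagedNoiseForm (pD n p.1 (pD n p.2 f)) (pD n p.1 (pD n p.2 g))
      = 16 * ∑ T ∈ univ.filter (fun T => 2 ≤ T.card), fourierSum f T * fourierSum g T := by
  rw [sum_congr rfl fun p hp => averagedNoiseForm_pD_pD (mem_offDiag.1 hp).2.2 f g,
    ← mul_sum, Finset.sum_offDiag_sum_filter_mem_mem, sum_filter]
  refine congrArg _ (sum_congr rfl fun T _ => ?_)
  rw [offDiag_card, nsmul_eq_mul]
  split_ifs with hT
  · have hcast : ((T.card * T.card - T.card : ℕ) : ℝ) = ((T.card : ℝ) - 1) * T.card := by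
      rw [Nat.cast_sub (Nat.le_mul_self _)]
      push_cast
      ring
    have hpos : (1 : ℝ) < T.card := by exact_mod_cast hT
    rw [hcast]
    field_simp [(sub_pos.2 hpos).ne', (zero_lt_one.trans hpos).ne']
  · obtain h | h : T.card = 0 ∨ T.card = 1 := by omega
    all_goals simp [h]

lemma sum_fhat_mul_fhat (f g : (Fin n → Bool) → ℝ) (s : Finset (Finset (Fin n))) :
    ∑ S ∈ s, fhat n f S * fhat n g S = (∑ S ∈ s, fourierSum f S * fourierSum g S) / 4 ^ n := by
  rw [sum_div]
  refine sum_congr rfl fun S _ => ?_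
  rw [fhat, fhat, Ev, Ev, div_mul_div_comm, ← mul_pow]
  norm_num [fourierSum]

end BoolCube

open BoolCube

/-- Under the sign conditions on the second differences, the
level-`≥ 2` Fourier weight vanishes iff for every pair `i < j` at least one of
`∂_{ij} f`, `∂_{ij} g` is identically zero. -/
theorem level2_weight_vanishing_criterion (n : ℕ) (f g : (Fin n → Bool) → ℝ)
    (hsign : (∀ (i j : Fin n), i ≠ j → ∀ x, 0 ≤ pD n i (pD n j f) x ∧
                0 ≤ pD n i (pD n j g) x) ∨
             (∀ (i j : Fin n), i ≠ j → ∀ x, pD n i (pD n j f) x ≤ 0 ∧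
                pD n i (pD n j g) x ≤ 0)) :
    (∑ S ∈ Finset.univ.filter (fun S : Finset (Fin n) => 2 ≤ S.card),
        fhat n f S * fhat n g S) = 0
    ↔ ∀ i j : Fin n, i < j →
        (∀ x, pD n i (pD n j f) x = 0) ∨ (∀ x, pD n i (pD n j g) x = 0) := by
  have hpair : ∀ i j : Fin n, i ≠ j → ∀ x y, 0 ≤ pD n i (pD n j f) x * pD n i (pD n j g) y := by
    intro i j hij x y
    rcases hsign with h | h
    · exact mul_nonneg (h i j hij x).1 (h i j hij y).2
    · exact mul_nonneg_of_nonpos_of_nonpos (h i j hij x).1 (h i j hij y).2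
  rw [sum_fhat_mul_fhat, div_eq_zero_iff, or_iff_left (by positivity),
    ← mul_eq_zero_iff_left (a := 16) (by norm_num), ← sum_offDiag_averagedNoiseForm_pD_pD,
    sum_eq_zero_iff_of_nonneg fun p hp =>
      averagedNoiseForm_nonneg (hpair _ _ (mem_offDiag.1 hp).2.2)]
  constructor
  · intro h i j hij
    simpa [funext_iff] using (averagedNoiseForm_eq_zero_iff (hpair i j hij.ne)).1
      (h (i, j) (by simp [hij.ne]))
  · rintro h ⟨i, j⟩ hp
    have hij : i ≠ j := (mem_offDiag.1 hp).2.2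
    refine (averagedNoiseForm_eq_zero_iff (hpair i j hij)).2 ?_
    rcases hij.lt_or_gt with hlt | hlt
    · simpa [funext_iff] using h i j hlt
    · rw [pD_comm i j f, pD_comm i j g]
      simpa [funext_iff] using h j i hlt
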